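/- (Dominant case) Suppose g ∈ G̃ is not a translation and g(A₀) ⊆ C. Then there exists s ∈ S_aff fixing the origin (that is, s = r_{H_{α,0}} for some α ∈ Φ) such that ℓ(sg) > ℓ(g), ℓ(gs) > ℓ(g), and sgs ≠ g. -/

import Mathlib

open RealInnerProductSpace

/-- A finite, reduced, irreducible, crystallographic root system spanning `V`,
together with a regular vector `ξ` determining the positive system. -/
structure RootSystemData (V : Type*) [NormedAddCommGroup V] [InnerProductSpace ℝ V] where
  Φ : Set V
  ξ : V
  finite : Φ.Finite
  nonzero : ∀ α ∈ Φ, α ≠ 0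
  reduced : ∀ α ∈ Φ, ∀ c : ℝ, c • α ∈ Φ → c = 1 ∨ c = -1
  crystallographic : ∀ α ∈ Φ, ∀ β ∈ Φ, ∃ n : ℤ, 2 * ⟪β, α⟫ / ⟪α, α⟫ = (n : ℝ)
  reflect_mem : ∀ α ∈ Φ, ∀ β ∈ Φ, β - (2 * ⟪β, α⟫ / ⟪α, α⟫) • α ∈ Φ
  spans : Submodule.span ℝ Φ = ⊤
  irreducible : ∀ Φ₁ Φ₂ : Set V, Φ = Φ₁ ∪ Φ₂ →
    (∀ a ∈ Φ₁, ∀ b ∈ Φ₂, ⟪a, b⟫ = (0 : ℝ)) → Φ₁ = ∅ ∨ Φ₂ = ∅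
  regular : ∀ α ∈ Φ, ⟪ξ, α⟫ ≠ (0 : ℝ)

/-- The affine orthogonal reflection of `V` fixing the hyperplane `{x | ⟪x, α⟫ = k}` pointwise. -/
noncomputable def reflPt {V : Type*} [NormedAddCommGroup V] [InnerProductSpace ℝ V]
    (α : V) (k : ℝ) (x : V) : V := x - ((⟪x, α⟫ - k) * (2 / ⟪α, α⟫)) • α

namespace RootSystemData

variable {V : Type*} [NormedAddCommGroup V] [InnerProductSpace ℝ V]

/-- The positive system `Φ⁺` determined by `ξ`. -/
def pos (R : RootSystemData V) : Set V := {α | α ∈ R.Φ ∧ 0 < ⟪R.ξ, α⟫}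

/-- The open dominant Weyl chamber `C`. -/
def chamber (R : RootSystemData V) : Set V := {x | ∀ α ∈ R.pos, 0 < ⟪x, α⟫}

/-- The opposite chamber `−C`. -/
def antiChamber (R : RootSystemData V) : Set V := {x | -x ∈ R.chamber}

/-- The affine root hyperplane `H_{α,k}`. -/
def hyp (R : RootSystemData V) (α : V) (k : ℤ) : Set V := {x | ⟪x, α⟫ = (k : ℝ)}

/-- `H` is an affine root hyperplane. -/
def IsHyp (R : RootSystemData V) (H : Set V) : Prop := ∃ α ∈ R.Φ, ∃ k : ℤ, H = R.hyp α k

/-- The union of all affine root hyperplanes. -/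
def hypUnion (R : RootSystemData V) : Set V := {x | ∃ α ∈ R.Φ, ∃ k : ℤ, ⟪x, α⟫ = (k : ℝ)}

/-- An alcove: a connected component of the complement of the union of the affine root
hyperplanes. -/
def IsAlcove (R : RootSystemData V) (A : Set V) : Prop :=
  ∃ x ∈ R.hypUnionᶜ, A = connectedComponentIn R.hypUnionᶜ x

/-- The base alcove `A₀`. -/
def baseAlcove (R : RootSystemData V) : Set V :=
  {x | ∀ α ∈ R.pos, 0 < ⟪x, α⟫ ∧ ⟪x, α⟫ < 1}

/-- The sets `A` and `B` lie in the same open half-space determined by the affine root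
hyperplane `H`. -/
def SameSide (R : RootSystemData V) (H A B : Set V) : Prop :=
  ∃ α ∈ R.Φ, ∃ k : ℤ, H = R.hyp α k ∧
    ((∀ x ∈ A ∪ B, ⟪x, α⟫ < (k : ℝ)) ∨ (∀ x ∈ A ∪ B, (k : ℝ) < ⟪x, α⟫))

/-- The affine root hyperplane `H` separates `A` and `B`: they lie in the two different open
half-spaces determined by `H`. -/
def Separates (R : RootSystemData V) (H A B : Set V) : Prop :=
  ∃ α ∈ R.Φ, ∃ k : ℤ, H = R.hyp α k ∧
    (((∀ x ∈ A, ⟪x, α⟫ < (k : ℝ)) ∧ (∀ x ∈ B, (k : ℝ) < ⟪x, α⟫)) ∨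
     ((∀ x ∈ B, ⟪x, α⟫ < (k : ℝ)) ∧ (∀ x ∈ A, (k : ℝ) < ⟪x, α⟫)))

/-- `d(A, B)`: the number of affine root hyperplanes separating `A` from `B`. -/
noncomputable def dist (R : RootSystemData V) (A B : Set V) : ℕ :=
  {H : Set V | R.IsHyp H ∧ R.Separates H A B}.ncard

/-- Two alcoves are adjacent. -/
def Adjacent (R : RootSystemData V) (A B : Set V) : Prop := A ≠ B ∧ R.dist A B = 1

/-- `H` is a wall of the alcove `A`: it is an affine root hyperplane with
`d(A, r_H(A)) = 1`. -/
def IsWall (R : RootSystemData V) (H A : Set V) : Prop :=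
  ∃ α ∈ R.Φ, ∃ k : ℤ, H = R.hyp α k ∧ R.dist A (reflPt α (k : ℝ) '' A) = 1

/-- `H` is a wall of the dominant chamber `C`: `H ∩ C = ∅` and `H ∩ closure C` affinely
spans `H`. -/
def IsChamberWall (R : RootSystemData V) (H : Set V) : Prop :=
  R.IsHyp H ∧ H ∩ R.chamber = ∅ ∧ affineSpan ℝ (H ∩ closure R.chamber) = affineSpan ℝ H

/-- A special point of `V`. -/
def IsSpecial (R : RootSystemData V) (v : V) : Prop := ∀ α ∈ R.Φ, ∃ n : ℤ, ⟪v, α⟫ = (n : ℝ)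

/-- The finite Weyl group `W₀`: the group of linear isometries of `V` generated by the
reflections in the hyperplanes `H_{α,0}`, `α ∈ Φ`. -/
def W0 (R : RootSystemData V) : Subgroup (V ≃ₗᵢ[ℝ] V) :=
  Subgroup.closure {f | ∃ α ∈ R.Φ, ∀ x, f x = reflPt α 0 x}

/-- A finite gallery `(Bs 0, …, Bs n)`: consecutive alcoves are adjacent. -/
def IsGallery (R : RootSystemData V) (Bs : ℕ → Set V) (n : ℕ) : Prop :=
  (∀ i ≤ n, R.IsAlcove (Bs i)) ∧ ∀ i < n, R.Adjacent (Bs i) (Bs (i + 1))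

/-- The Umbrella property for a gallery `(Bs 0, …, Bs n)`, an alcove `A` and a wall `H`
of `A`: every alcove of the gallery is on the same side of `H` as `A`, and the gallery can
be extended to a minimal gallery from `Bs 0` to `A`. -/
def Umbrella (R : RootSystemData V) (Bs : ℕ → Set V) (n : ℕ) (A H : Set V) : Prop :=
  R.IsWall H A ∧ (∀ i ≤ n, R.SameSide H (Bs i) A) ∧
    ∃ m, n ≤ m ∧ ∃ Cs : ℕ → Set V, (∀ i ≤ n, Cs i = Bs i) ∧ Cs m = A ∧
      R.IsGallery Cs m ∧ R.dist (Cs 0) (Cs m) = m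

/-- The length of an invertible affine transformation: `ℓ(g) = d(A₀, g(A₀))`. -/
noncomputable def len (R : RootSystemData V) (g : V ≃ᵃ[ℝ] V) : ℕ :=
  R.dist R.baseAlcove (⇑g '' R.baseAlcove)

/-- `g` is a translation of `V`. -/
def IsTranslation (g : V ≃ᵃ[ℝ] V) : Prop := ∃ v : V, ∀ x, g x = x + v

/-- `s ∈ S_aff`: `s` is the reflection in an affine root hyperplane which is a wall of the
base alcove `A₀`. -/
def IsSimpleRefl (R : RootSystemData V) (s : V ≃ᵃ[ℝ] V) : Prop :=
  ∃ α ∈ R.Φ, ∃ k : ℤ, R.IsWall (R.hyp α k) R.baseAlcove ∧ ∀ x, s x = reflPt α (k : ℝ) x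

end RootSystemData

/-- The sequence of iterated conjugates `g, s₁gs₁, s₂s₁gs₁s₂, …`. -/
noncomputable def conjSeq {V : Type*} [NormedAddCommGroup V] [InnerProductSpace ℝ V]
    (g : V ≃ᵃ[ℝ] V) (ss : ℕ → V ≃ᵃ[ℝ] V) : ℕ → V ≃ᵃ[ℝ] V
  | 0 => g
  | n + 1 => ss n * conjSeq g ss n * ss n

namespace RootSystemData

variable {V : Type*} [NormedAddCommGroup V] [InnerProductSpace ℝ V]

/-- The Diamond Property for `g`: a sequence of length-preserving conjugations by simple
reflections leads to an element `g′` admitting a simple reflection `s` with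
`ℓ(sg′) > ℓ(g′)`, `ℓ(g′s) > ℓ(g′)` and `sg′s ≠ g′`. -/
def DiamondProperty (R : RootSystemData V) (g : V ≃ᵃ[ℝ] V) : Prop :=
  ∃ (n : ℕ) (ss : ℕ → V ≃ᵃ[ℝ] V), (∀ i < n, R.IsSimpleRefl (ss i)) ∧
    (∀ i < n, R.len (conjSeq g ss (i + 1)) = R.len g) ∧
    ∃ s : V ≃ᵃ[ℝ] V, R.IsSimpleRefl s ∧
      R.len (s * conjSeq g ss n) > R.len (conjSeq g ss n) ∧
      R.len (conjSeq g ss n * s) > R.len (conjSeq g ss n) ∧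
      s * conjSeq g ss n * s ≠ conjSeq g ss n

end RootSystemData

/-!
Write `g = t_w ∘ u` with `u ∈ W₀`. As `g` is not a translation, `u ≠ 1`, so `u` sends some simple
root `γ` to a negative root (an element of `W₀` sending every simple root to a positive root is
trivial, by the deletion argument on words in simple reflections). Take `s = s_γ`: its mirror
`H_{γ,0}` is the only hyperplane between `A₀` and `s(A₀)`.

* Since `g(A₀)` is dominant, `H_{γ,0}` does not separate `A₀` from `g(A₀)` but separates `s(A₀)`
  from `g(A₀)`, so `ℓ(sg) = d(s(A₀), g(A₀)) > d(A₀, g(A₀))`.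
* As `g` permutes the affine root hyperplanes, `n = ⟪w, uγ⟫` is an integer, and `n ≤ -1` by
  dominance. The hyperplane `g(H_{γ,0}) = H_{uγ,n}` does not separate `A₀` from `g(A₀)` but
  separates it from `gs(A₀)`, so `ℓ(gs) > ℓ(g)`.
* If `sgs = g`, then `s` fixes `w` and commutes with `u`, so `s_{uγ} = u s u⁻¹ = s` fixes `w`
  and `n = 0`.
-/
theorem exists_nsmul_add_of_mem_closure {M : Type*} [AddCommMonoid M] {S : Set M} (γ : M) {v : M}
    (hv : v ∈ AddSubmonoid.closure S) :
    ∃ a : ℕ, ∃ v' ∈ AddSubmonoid.closure (S \ {γ}), v = a • γ + v' := by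
  induction hv using AddSubmonoid.closure_induction with
  | mem δ hδ =>
    by_cases h : δ = γ
    · exact ⟨1, 0, zero_mem _, by rw [h, one_smul, add_zero]⟩
    · exact ⟨0, δ, AddSubmonoid.subset_closure ⟨hδ, h⟩, by rw [zero_smul, zero_add]⟩
  | zero => exact ⟨0, 0, zero_mem _, by rw [zero_smul, add_zero]⟩
  | add _ _ _ _ h₁ h₂ =>
    obtain ⟨a, v, hv, rfl⟩ := h₁
    obtain ⟨b, v', hv', rfl⟩ := h₂
    exact ⟨a + b, v + v', add_mem hv hv', by rw [add_smul]; abel⟩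

section InnerProductSpace

variable {V : Type*} [NormedAddCommGroup V] [InnerProductSpace ℝ V]

noncomputable def orthoRefl (α : V) : V ≃ₗᵢ[ℝ] V := (ℝ ∙ α)ᗮ.reflection

theorem orthoRefl_apply (α x : V) : orthoRefl α x = x - (2 * ⟪x, α⟫ / ⟪α, α⟫) • α := by
  rw [orthoRefl, Submodule.reflection_orthogonal_apply, Submodule.reflection_singleton_apply,
    real_inner_self_eq_norm_sq, real_inner_comm]
  simp only [RCLike.ofReal_real_eq_id, id]
  module

theorem orthoRefl_apply_eq_reflPt (α x : V) : orthoRefl α x = reflPt α 0 x := by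
  rw [orthoRefl_apply, reflPt]
  ring_nf

theorem eq_orthoRefl_of_forall_eq_reflPt {α : V} {f : V ≃ₗᵢ[ℝ] V} (hf : ∀ x, f x = reflPt α 0 x) :
    f = orthoRefl α :=
  LinearIsometryEquiv.ext fun x => (hf x).trans (orthoRefl_apply_eq_reflPt α x).symm

@[simp]
theorem orthoRefl_orthoRefl (α x : V) : orthoRefl α (orthoRefl α x) = x :=
  Submodule.reflection_reflection _ x

@[simp]
theorem orthoRefl_inv (α : V) : (orthoRefl α)⁻¹ = orthoRefl α :=
  Submodule.reflection_inv

theorem orthoRefl_mul_self (α : V) : orthoRefl α * orthoRefl α = 1 :=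
  Submodule.reflection_mul_reflection _

theorem image_orthoRefl_image_orthoRefl (α : V) (X : Set V) :
    orthoRefl α '' (orthoRefl α '' X) = X := by
  simp [Set.image_image]

theorem orthoRefl_self (α : V) : orthoRefl α α = -α :=
  Submodule.reflection_orthogonalComplement_singleton_eq_neg α

theorem orthoRefl_neg (α : V) : orthoRefl (-α) = orthoRefl α := by
  ext x
  rw [orthoRefl_apply, orthoRefl_apply, inner_neg_right, inner_neg_left, inner_neg_right, neg_neg]
  module

theorem inner_orthoRefl_left (α x y : V) : ⟪orthoRefl α x, y⟫ = ⟪x, orthoRefl α y⟫ := by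
  rw [← (orthoRefl α).inner_map_map x, orthoRefl_orthoRefl]

theorem inner_orthoRefl_self (α x : V) : ⟪orthoRefl α x, α⟫ = -⟪x, α⟫ := by
  rw [inner_orthoRefl_left, orthoRefl_self, inner_neg_right]

theorem orthoRefl_map (u : V ≃ₗᵢ[ℝ] V) (α : V) : orthoRefl (u α) = u * orthoRefl α * u⁻¹ := by
  ext x
  change orthoRefl (u α) x = u (orthoRefl α (u.symm x))
  rw [orthoRefl_apply, orthoRefl_apply, map_sub, map_smul, u.apply_symm_apply,
    ← u.inner_map_map (u.symm x), u.apply_symm_apply, u.inner_map_map]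

theorem inner_eq_zero_of_orthoRefl_apply_eq {α w : V} (h : orthoRefl α w = w) : ⟪w, α⟫ = 0 := by
  rw [real_inner_comm, ← Submodule.mem_orthogonal_singleton_iff_inner_right]
  exact (Submodule.reflection_eq_self_iff w).1 h

noncomputable def orthoReflAff (α : V) : V ≃ᵃ[ℝ] V := (orthoRefl α).toLinearEquiv.toAffineEquiv

@[simp]
theorem coe_orthoReflAff (α : V) : ⇑(orthoReflAff α) = orthoRefl α := rfl

theorem inner_apply_of_eq_add {g : V → V} {w : V} {u : V ≃ₗᵢ[ℝ] V} (hg : ∀ x, g x = w + u x)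
    (x β : V) : ⟪g x, u β⟫ = ⟪x, β⟫ + ⟪w, u β⟫ := by
  rw [hg, inner_add_left, u.inner_map_map, add_comm]

theorem image_setOf_inner_eq {g : V → V} {w : V} {u : V ≃ₗᵢ[ℝ] V} (hg : ∀ x, g x = w + u x)
    (β : V) (c : ℝ) : g '' {x | ⟪x, β⟫ = c} = {y | ⟪y, u β⟫ = c + ⟪w, u β⟫} := by
  ext y
  constructor
  · rintro ⟨x, hx, rfl⟩
    change ⟪g x, u β⟫ = c + ⟪w, u β⟫
    rw [inner_apply_of_eq_add hg, show ⟪x, β⟫ = c from hx]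
  · intro hy
    refine ⟨u.symm (y - w), ?_, by rw [hg, u.apply_symm_apply, add_sub_cancel]⟩
    change ⟪u.symm (y - w), β⟫ = c
    rw [← u.inner_map_map, u.apply_symm_apply, inner_sub_left,
      show ⟪y, u β⟫ = c + ⟪w, u β⟫ from hy, add_sub_cancel_right]

theorem exists_smul_of_setOf_inner_eq {α β : V} (hα : α ≠ 0) {c d : ℝ}
    (h : {x : V | ⟪x, α⟫ = c} = {x | ⟪x, β⟫ = d}) : ∃ r : ℝ, β = r • α ∧ d = r * c := by
  have hαα : 0 < ⟪α, α⟫ := real_inner_self_pos.2 hα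
  set p : V := (c / ⟪α, α⟫) • α
  have hpα : ⟪p, α⟫ = c := by
    rw [real_inner_smul_left]
    field_simp
  have hmem : ∀ v : V, ⟪v, α⟫ = 0 → ⟪p + v, β⟫ = d := fun v hv =>
    (h ▸ (by rw [← hpα, ← add_zero ⟪p, α⟫, ← hv, ← inner_add_left]; rfl) :
      p + v ∈ {x : V | ⟪x, β⟫ = d})
  have hpβ : ⟪p, β⟫ = d := by simpa using hmem 0 (inner_zero_left _)
  set r := ⟪β, α⟫ / ⟪α, α⟫
  -- `β - r • α` is orthogonal to `α`, hence to `β`, hence zero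
  have hv : ⟪β - r • α, α⟫ = 0 := by
    rw [inner_sub_left, real_inner_smul_left, div_mul_cancel₀ _ hαα.ne', sub_self]
  have hvβ : ⟪β - r • α, β⟫ = 0 := by
    have := hmem _ hv
    rw [inner_add_left, hpβ] at this
    linarith
  have hβ : β = r • α := by
    rw [← sub_eq_zero, ← inner_self_eq_zero (𝕜 := ℝ), inner_sub_right, real_inner_smul_right,
      hvβ, hv, mul_zero, sub_zero]
  exact ⟨r, hβ, by rw [← hpβ, hβ, real_inner_smul_right, hpα]⟩

theorem orthoReflAff_mul_mul_orthoReflAff_ne {γ : V} {g : V ≃ᵃ[ℝ] V} {w : V} {u : V ≃ₗᵢ[ℝ] V}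
    (hgx : ∀ x, g x = w + u x) (hwuγ : ⟪w, u γ⟫ ≠ 0) :
    orthoReflAff γ * g * orthoReflAff γ ≠ g := by
  intro h
  have hx : ∀ x, orthoRefl γ (w + u (orthoRefl γ x)) = w + u x := fun x => by
    have := DFunLike.congr_fun h x
    rwa [AffineEquiv.coe_mul, AffineEquiv.coe_mul, Function.comp_apply, Function.comp_apply,
      coe_orthoReflAff, hgx, hgx] at this
  have hw : orthoRefl γ w = w := by simpa using hx 0
  have hu : orthoRefl γ * u * orthoRefl γ = u := LinearIsometryEquiv.ext fun x => by
    simpa [hw] using hx x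
  have hsuγ : orthoRefl (u γ) = orthoRefl γ := by
    rw [orthoRefl_map, mul_inv_eq_iff_eq_mul]
    conv_lhs => rw [← hu]
    rw [mul_assoc, orthoRefl_mul_self, mul_one]
  exact hwuγ (inner_eq_zero_of_orthoRefl_apply_eq (hsuγ ▸ hw))

theorem inner_nonneg_of_mem_closure {S : Set V} {x v : V} (hS : ∀ δ ∈ S, 0 ≤ ⟪x, δ⟫)
    (hv : v ∈ AddSubmonoid.closure S) : 0 ≤ ⟪x, v⟫ := by
  induction hv using AddSubmonoid.closure_induction with
  | mem δ hδ => exact hS δ hδ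
  | zero => rw [inner_zero_right]
  | add _ _ _ _ h₁ h₂ => rw [inner_add_right]; exact add_nonneg h₁ h₂

theorem eq_zero_or_inner_pos_of_mem_closure {S : Set V} {x v : V} (hS : ∀ δ ∈ S, 0 < ⟪x, δ⟫)
    (hv : v ∈ AddSubmonoid.closure S) : v = 0 ∨ 0 < ⟪x, v⟫ := by
  induction hv using AddSubmonoid.closure_induction with
  | mem δ hδ => exact Or.inr (hS δ hδ)
  | zero => exact Or.inl rfl
  | add v₁ v₂ _ _ h₁ h₂ =>
    rcases h₁ with rfl | h₁
    · rwa [zero_add]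
    rcases h₂ with rfl | h₂
    · rw [add_zero]; exact Or.inr h₁
    · rw [inner_add_right]; exact Or.inr (add_pos h₁ h₂)

end InnerProductSpace

namespace RootSystemData

variable {V : Type*} [NormedAddCommGroup V] [InnerProductSpace ℝ V] (R : RootSystemData V)

theorem inner_self_pos {α : V} (hα : α ∈ R.Φ) : 0 < ⟪α, α⟫ :=
  real_inner_self_pos.2 (R.nonzero α hα)

theorem orthoRefl_mem {α β : V} (hα : α ∈ R.Φ) (hβ : β ∈ R.Φ) : orthoRefl α β ∈ R.Φ := by
  rw [orthoRefl_apply]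
  exact R.reflect_mem α hα β hβ

theorem neg_mem {α : V} (hα : α ∈ R.Φ) : -α ∈ R.Φ := by
  simpa only [orthoRefl_self] using R.orthoRefl_mem hα hα

theorem mem_pos_or_neg_mem_pos {α : V} (hα : α ∈ R.Φ) : α ∈ R.pos ∨ -α ∈ R.pos := by
  rcases (R.regular α hα).lt_or_gt with h | h
  · exact Or.inr ⟨R.neg_mem hα, by rw [inner_neg_right]; linarith⟩
  · exact Or.inl ⟨hα, h⟩

theorem neg_notMem_pos {α : V} (hα : α ∈ R.pos) : -α ∉ R.pos := fun h => by
  have := h.2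
  rw [inner_neg_right] at this
  linarith [hα.2]

theorem pos_finite : R.pos.Finite := R.finite.subset fun _ h => h.1

theorem inner_mul_inner_lt {α β : V} (hα : α ∈ R.Φ) (hβ : β ∈ R.Φ) (h₁ : β ≠ α)
    (h₂ : β ≠ -α) : ⟪α, β⟫ * ⟪α, β⟫ < ⟪α, α⟫ * ⟪β, β⟫ := by
  refine (real_inner_mul_inner_self_le α β).lt_of_ne fun h => ?_
  have habs : ‖⟪α, β⟫‖ = ‖α‖ * ‖β‖ := by
    rw [Real.norm_eq_abs, ← sq_eq_sq₀ (abs_nonneg _) (by positivity), sq_abs, mul_pow,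
      ← real_inner_self_eq_norm_sq, ← real_inner_self_eq_norm_sq, sq, h]
  obtain ⟨c, -, rfl⟩ := (norm_inner_eq_norm_iff (R.nonzero α hα) (R.nonzero β hβ)).1 habs
  rcases R.reduced α hα c hβ with rfl | rfl
  · exact h₁ (one_smul ℝ α)
  · exact h₂ (neg_one_smul ℝ α)

theorem sub_mem_of_inner_pos {α β : V} (hα : α ∈ R.Φ) (hβ : β ∈ R.Φ) (hαβ : 0 < ⟪α, β⟫)
    (h₁ : β ≠ α) (h₂ : β ≠ -α) : α - β ∈ R.Φ := by
  obtain ⟨n, hn⟩ := R.crystallographic α hα β hβ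
  obtain ⟨m, hm⟩ := R.crystallographic β hβ α hα
  have hαα := R.inner_self_pos hα
  have hββ := R.inner_self_pos hβ
  rw [real_inner_comm] at hn
  have hn0 : (0 : ℝ) < n := hn ▸ by positivity
  have hm0 : (0 : ℝ) < m := hm ▸ by positivity
  -- the Cartan integers `n, m ≥ 1` satisfy `n m < 4` by strict Cauchy–Schwarz
  have hnm : (n : ℝ) * m < 4 := by
    rw [← hn, ← hm, div_mul_div_comm, div_lt_iff₀ (by positivity)]
    nlinarith [R.inner_mul_inner_lt hα hβ h₁ h₂]
  have : n = 1 ∨ m = 1 := by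
    have : (0 : ℤ) < n := by exact_mod_cast hn0
    have : (0 : ℤ) < m := by exact_mod_cast hm0
    have : n * m < 4 := by exact_mod_cast hnm
    by_contra! h
    have : 2 ≤ n := by omega
    have : 2 ≤ m := by omega
    nlinarith
  rcases this with rfl | rfl
  · have := R.neg_mem (R.reflect_mem α hα β hβ)
    rwa [real_inner_comm, hn, Int.cast_one, one_smul, neg_sub] at this
  · have := R.reflect_mem β hβ α hα
    rwa [hm, Int.cast_one, one_smul] at this

def simpleRoots : Set V := {γ | γ ∈ R.pos ∧ ¬∃ α ∈ R.pos, ∃ β ∈ R.pos, γ = α + β}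

theorem inner_simpleRoots_nonpos {γ δ : V} (hγ : γ ∈ R.simpleRoots) (hδ : δ ∈ R.simpleRoots)
    (hne : γ ≠ δ) : ⟪γ, δ⟫ ≤ 0 := by
  by_contra! h
  have hδγ : δ ≠ -γ := fun h' => R.neg_notMem_pos hγ.1 (h' ▸ hδ.1)
  rcases R.mem_pos_or_neg_mem_pos (R.sub_mem_of_inner_pos hγ.1.1 hδ.1.1 h hne.symm hδγ)
    with hp | hp
  · exact hγ.2 ⟨γ - δ, hp, δ, hδ.1, by abel⟩
  · exact hδ.2 ⟨-(γ - δ), hp, γ, hγ.1, by abel⟩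

theorem pos_subset_closure_simpleRoots : R.pos ⊆ AddSubmonoid.closure R.simpleRoots := by
  intro α hα
  by_contra hα'
  obtain ⟨β, ⟨hβ, hβ'⟩, hmin⟩ := Set.exists_min_image
    {β | β ∈ R.pos ∧ β ∉ AddSubmonoid.closure R.simpleRoots} (fun β => ⟪R.ξ, β⟫)
    (R.pos_finite.subset fun _ h => h.1) ⟨α, hα, hα'⟩
  obtain ⟨β₁, h₁, β₂, h₂, rfl⟩ : ∃ β₁ ∈ R.pos, ∃ β₂ ∈ R.pos, β = β₁ + β₂ := by
    by_contra h
    exact hβ' (AddSubmonoid.subset_closure ⟨hβ, h⟩)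
  have hmem : ∀ β' ∈ R.pos, ⟪R.ξ, β'⟫ < ⟪R.ξ, β₁ + β₂⟫ →
      β' ∈ AddSubmonoid.closure R.simpleRoots := fun β' hβ' hlt => by
    by_contra h
    exact (hmin β' ⟨hβ', h⟩).not_gt hlt
  rw [inner_add_right] at hmem
  exact hβ' (add_mem (hmem β₁ h₁ (by linarith [h₂.2])) (hmem β₂ h₂ (by linarith [h₁.2])))

theorem exists_simpleRoot_inner_pos {α : V} (hα : α ∈ R.pos) :
    ∃ γ ∈ R.simpleRoots, 0 < ⟪α, γ⟫ := by
  by_contra! h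
  have := inner_nonneg_of_mem_closure (x := -α)
    (fun δ hδ => by rw [inner_neg_left]; linarith [h δ hδ]) (R.pos_subset_closure_simpleRoots hα)
  rw [inner_neg_left] at this
  linarith [R.inner_self_pos hα.1]

theorem orthoRefl_mem_pos {γ α : V} (hγ : γ ∈ R.simpleRoots) (hα : α ∈ R.pos) (hne : α ≠ γ) :
    orthoRefl γ α ∈ R.pos := by
  have hγΦ := hγ.1.1
  refine (R.mem_pos_or_neg_mem_pos (R.orthoRefl_mem hγΦ hα.1)).resolve_right fun hneg => ?_
  set c := 2 * ⟪α, γ⟫ / ⟪γ, γ⟫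
  rw [orthoRefl_apply, neg_sub] at hneg
  obtain ⟨a, v, hv, hav⟩ := exists_nsmul_add_of_mem_closure γ (R.pos_subset_closure_simpleRoots hα)
  obtain ⟨b, v', hv', hbv'⟩ :=
    exists_nsmul_add_of_mem_closure γ (R.pos_subset_closure_simpleRoots hneg)
  rw [← Nat.cast_smul_eq_nsmul ℝ] at hav hbv'
  -- the parts `v, v'` of `α` and `c γ - α` off `γ` add up to `t γ`; pairing with `γ` gives
  -- `t ≤ 0`, pairing with `ξ` gives `t > 0` because `v ≠ 0`
  have hsum : v + v' = (c - a - b) • γ := by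
    rw [sub_smul, sub_smul, eq_sub_of_add_eq' hav.symm, eq_sub_of_add_eq' hbv'.symm]
    abel
  have hv0 : v ≠ 0 := by
    rintro rfl
    rw [add_zero] at hav
    rcases R.reduced γ hγΦ a (hav ▸ hα.1) with h | h
    · exact hne (by rw [hav, h, one_smul])
    · linarith [a.cast_nonneg (α := ℝ)]
  have hS : ∀ δ ∈ R.simpleRoots \ {γ}, 0 ≤ ⟪-γ, δ⟫ := fun δ hδ => by
    rw [inner_neg_left, neg_nonneg]
    exact R.inner_simpleRoots_nonpos hγ hδ.1 (Ne.symm hδ.2)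
  have hγside := inner_nonneg_of_mem_closure hS (add_mem hv hv')
  have hξside : 0 < ⟪R.ξ, v + v'⟫ := by
    have hξS : ∀ δ ∈ R.simpleRoots \ {γ}, 0 < ⟪R.ξ, δ⟫ := fun δ hδ => hδ.1.1.2
    rw [inner_add_right]
    exact add_pos_of_pos_of_nonneg
      ((eq_zero_or_inner_pos_of_mem_closure hξS hv).resolve_left hv0)
      (inner_nonneg_of_mem_closure (fun δ hδ => (hξS δ hδ).le) hv')
  rw [hsum, inner_neg_left, real_inner_smul_right] at hγside
  rw [hsum, real_inner_smul_right] at hξside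
  nlinarith [R.inner_self_pos hγΦ, hγ.1.2]

theorem W0_eq_closure : R.W0 = Subgroup.closure (orthoRefl '' R.Φ) := by
  refine congrArg Subgroup.closure (Set.ext fun f => ⟨?_, ?_⟩)
  · rintro ⟨α, hα, hf⟩
    exact ⟨α, hα, (eq_orthoRefl_of_forall_eq_reflPt hf).symm⟩
  · rintro ⟨α, hα, rfl⟩
    exact ⟨α, hα, orthoRefl_apply_eq_reflPt α⟩

theorem orthoRefl_mem_W0 {α : V} (hα : α ∈ R.Φ) : orthoRefl α ∈ R.W0 := by
  rw [W0_eq_closure]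
  exact Subgroup.subset_closure ⟨α, hα, rfl⟩

theorem W0_apply_mem {u : V ≃ₗᵢ[ℝ] V} (hu : u ∈ R.W0) {β : V} (hβ : β ∈ R.Φ) : u β ∈ R.Φ := by
  rw [W0_eq_closure] at hu
  induction hu using Subgroup.closure_induction'' generalizing β with
  | mem _ h => obtain ⟨α, hα, rfl⟩ := h; exact R.orthoRefl_mem hα hβ
  | inv_mem _ h => obtain ⟨α, hα, rfl⟩ := h; rw [orthoRefl_inv]; exact R.orthoRefl_mem hα hβ
  | one => exact hβ
  | mul _ _ _ _ h₁ h₂ => exact h₁ (h₂ hβ)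

theorem orthoRefl_mem_closure_simpleRoots {α : V} (hα : α ∈ R.pos) :
    orthoRefl α ∈ Subgroup.closure (orthoRefl '' R.simpleRoots) := by
  by_contra hα'
  obtain ⟨β, ⟨hβ, hβ'⟩, hmin⟩ := Set.exists_min_image
    {β | β ∈ R.pos ∧ orthoRefl β ∉ Subgroup.closure (orthoRefl '' R.simpleRoots)}
    (fun β => ⟪R.ξ, β⟫) (R.pos_finite.subset fun _ h => h.1) ⟨α, hα, hα'⟩
  obtain ⟨γ, hγ, hβγ⟩ := R.exists_simpleRoot_inner_pos hβ
  have hne : β ≠ γ := fun h => hβ' (Subgroup.subset_closure ⟨β, h ▸ hγ, rfl⟩)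
  have hγmem : orthoRefl γ ∈ Subgroup.closure (orthoRefl '' R.simpleRoots) :=
    Subgroup.subset_closure ⟨γ, hγ, rfl⟩
  -- `s_γ β` is a lower positive root, and `s_β` is conjugate to its reflection by `s_γ`
  have hlower : ⟪R.ξ, orthoRefl γ β⟫ < ⟪R.ξ, β⟫ := by
    rw [orthoRefl_apply, inner_sub_right, real_inner_smul_right]
    have : 0 < 2 * ⟪β, γ⟫ / ⟪γ, γ⟫ := by have := R.inner_self_pos hγ.1.1; positivity
    nlinarith [hγ.1.2]
  have hmem : orthoRefl (orthoRefl γ β) ∈ Subgroup.closure (orthoRefl '' R.simpleRoots) := by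
    by_contra h
    exact (hmin _ ⟨R.orthoRefl_mem_pos hγ hβ hne, h⟩).not_gt hlower
  have hconj : orthoRefl β = orthoRefl γ * orthoRefl (orthoRefl γ β) * orthoRefl γ := by
    rw [orthoRefl_map, orthoRefl_inv, ← mul_assoc, ← mul_assoc, orthoRefl_mul_self, one_mul,
      mul_assoc, orthoRefl_mul_self, mul_one]
  exact hβ' (hconj ▸ mul_mem (mul_mem hγmem hmem) hγmem)

theorem W0_le_closure_simpleRoots : R.W0 ≤ Subgroup.closure (orthoRefl '' R.simpleRoots) := by
  rw [W0_eq_closure, Subgroup.closure_le]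
  rintro _ ⟨α, hα, rfl⟩
  rcases R.mem_pos_or_neg_mem_pos hα with h | h
  · exact R.orthoRefl_mem_closure_simpleRoots h
  · rw [← orthoRefl_neg]
    exact R.orthoRefl_mem_closure_simpleRoots h

theorem exists_list_simpleRoots_of_mem_W0 {u : V ≃ₗᵢ[ℝ] V} (hu : u ∈ R.W0) :
    ∃ L : List V, (∀ γ ∈ L, γ ∈ R.simpleRoots) ∧ (L.map orthoRefl).prod = u := by
  have hu' := R.W0_le_closure_simpleRoots hu
  clear hu
  induction hu' using Subgroup.closure_induction'' with
  | mem _ h =>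
    obtain ⟨γ, hγ, rfl⟩ := h
    exact ⟨[γ], by simpa using hγ, by simp⟩
  | inv_mem _ h =>
    obtain ⟨γ, hγ, rfl⟩ := h
    exact ⟨[γ], by simpa using hγ, by simp⟩
  | one => exact ⟨[], by simp, by simp⟩
  | mul _ _ _ _ h₁ h₂ =>
    obtain ⟨L₁, hL₁, rfl⟩ := h₁
    obtain ⟨L₂, hL₂, rfl⟩ := h₂
    refine ⟨L₁ ++ L₂, fun γ hγ => ?_, by rw [List.map_append, List.prod_append]⟩
    exact (List.mem_append.1 hγ).elim (hL₁ γ) (hL₂ γ)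

theorem exists_list_prod_eq_prod_mul_orthoRefl {L : List V} (hL : ∀ γ ∈ L, γ ∈ R.simpleRoots)
    {β : V} (hβ : β ∈ R.pos) (h : (L.map orthoRefl).prod β ∉ R.pos) :
    ∃ L' : List V, (∀ γ ∈ L', γ ∈ R.simpleRoots) ∧ L'.length + 1 = L.length ∧
      (L'.map orthoRefl).prod = (L.map orthoRefl).prod * orthoRefl β := by
  induction L with
  | nil => exact absurd hβ h
  | cons γ L ih =>
    have hγ := hL γ List.mem_cons_self
    have hL' : ∀ δ ∈ L, δ ∈ R.simpleRoots := fun δ hδ => hL δ (List.mem_cons_of_mem γ hδ)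
    set v := (L.map orthoRefl).prod
    rw [List.map_cons, List.prod_cons] at h ⊢
    by_cases hv : v β ∈ R.pos
    · have hvβ : v β = γ := by
        by_contra hne
        exact h (R.orthoRefl_mem_pos hγ hv hne)
      refine ⟨L, hL', rfl, ?_⟩
      rw [← hvβ, orthoRefl_map, mul_assoc, mul_assoc, inv_mul_cancel_left, mul_assoc,
        orthoRefl_mul_self, mul_one]
    · obtain ⟨L', hL's, hlen, heq⟩ := ih hL' hv
      refine ⟨γ :: L', ?_, by simp [← hlen], by rw [List.map_cons, List.prod_cons, heq, mul_assoc]⟩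
      exact List.forall_mem_cons.2 ⟨hγ, hL's⟩

theorem list_prod_eq_one_of_apply_mem_pos (L : List V) (hL : ∀ γ ∈ L, γ ∈ R.simpleRoots)
    (h : ∀ γ ∈ R.simpleRoots, (L.map orthoRefl).prod γ ∈ R.pos) : (L.map orthoRefl).prod = 1 := by
  induction hn : L.length using Nat.strong_induction_on generalizing L with
  | _ n ih =>
    rcases L.eq_nil_or_concat with rfl | ⟨L₁, γ, rfl⟩
    · rfl
    simp only [List.concat_eq_append, List.mem_append, List.mem_singleton] at hL
    have hγ := hL γ (Or.inr rfl)
    have hprod : ((L₁ ++ [γ]).map orthoRefl).prod = (L₁.map orthoRefl).prod * orthoRefl γ := by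
      simp
    have hneg : (L₁.map orthoRefl).prod γ ∉ R.pos := fun hpos => by
      have := h γ hγ
      rw [List.concat_eq_append, hprod, LinearIsometryEquiv.coe_mul, Function.comp_apply,
        orthoRefl_self, map_neg] at this
      exact R.neg_notMem_pos hpos this
    obtain ⟨L', hL', hlen, heq⟩ :=
      R.exists_list_prod_eq_prod_mul_orthoRefl (fun δ hδ => hL δ (Or.inl hδ)) hγ.1 hneg
    rw [List.concat_eq_append, hprod, ← heq] at h ⊢
    refine ih L'.length ?_ L' hL' h rfl
    rw [← hn, List.concat_eq_append, List.length_append]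
    simp [← hlen]

theorem eq_one_of_apply_mem_pos {u : V ≃ₗᵢ[ℝ] V} (hu : u ∈ R.W0)
    (h : ∀ γ ∈ R.simpleRoots, u γ ∈ R.pos) : u = 1 := by
  obtain ⟨L, hL, rfl⟩ := R.exists_list_simpleRoots_of_mem_W0 hu
  exact R.list_prod_eq_one_of_apply_mem_pos L hL h

theorem exists_simpleRoot_apply_notMem_pos {u : V ≃ₗᵢ[ℝ] V} (hu : u ∈ R.W0) (hu1 : u ≠ 1) :
    ∃ γ ∈ R.simpleRoots, u γ ∉ R.pos := by
  by_contra! h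
  exact hu1 (R.eq_one_of_apply_mem_pos hu h)

def sepSet (X Y : Set V) : Set (Set V) := {H | R.IsHyp H ∧ R.Separates H X Y}

theorem dist_eq_ncard_sepSet (X Y : Set V) : R.dist X Y = (R.sepSet X Y).ncard := rfl

theorem sepSet_comm (X Y : Set V) : R.sepSet X Y = R.sepSet Y X := by
  ext H
  constructor <;> rintro ⟨hH, β, hβ, k, rfl, h⟩ <;> exact ⟨hH, β, hβ, k, rfl, h.symm⟩

theorem dist_comm (X Y : Set V) : R.dist X Y = R.dist Y X := by
  rw [dist_eq_ncard_sepSet, dist_eq_ncard_sepSet, sepSet_comm]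

theorem hyp_mem_sepSet {α : V} (hα : α ∈ R.Φ) {k : ℤ} {X Y : Set V}
    (hX : ∀ x ∈ X, ⟪x, α⟫ < k) (hY : ∀ y ∈ Y, (k : ℝ) < ⟪y, α⟫) : R.hyp α k ∈ R.sepSet X Y :=
  ⟨⟨α, hα, k, rfl⟩, α, hα, k, rfl, Or.inl ⟨hX, hY⟩⟩

theorem hyp_notMem_sepSet {α : V} (hα : α ≠ 0) {k : ℤ} {X Y : Set V} {x y : V} (hx : x ∈ X)
    (hy : y ∈ Y) (hxk : (k : ℝ) < ⟪x, α⟫) (hyk : (k : ℝ) < ⟪y, α⟫) :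
    R.hyp α k ∉ R.sepSet X Y := by
  rintro ⟨-, β, -, l, hH, hXY⟩
  obtain ⟨r, rfl, hl⟩ := exists_smul_of_setOf_inner_eq hα hH
  simp only [real_inner_smul_right, hl] at hXY
  rcases hXY with ⟨h₁, h₂⟩ | ⟨h₁, h₂⟩
  · nlinarith [h₁ x hx, h₂ y hy]
  · nlinarith [h₁ y hy, h₂ x hx]

theorem sepSet_finite {X Y : Set V} (hX : X.Nonempty) (hY : Y.Nonempty) :
    (R.sepSet X Y).Finite := by
  obtain ⟨x, hx⟩ := hX
  obtain ⟨y, hy⟩ := hY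
  have hsub : R.sepSet X Y ⊆ ⋃ β ∈ R.Φ, (fun k : ℤ => R.hyp β k) ''
      Set.Icc ⌈min ⟪x, β⟫ ⟪y, β⟫⌉ ⌊max ⟪x, β⟫ ⟪y, β⟫⌋ := by
    rintro H ⟨-, β, hβ, k, rfl, hXY⟩
    refine Set.mem_biUnion hβ ⟨k, ⟨Int.ceil_le.2 ?_, Int.le_floor.2 ?_⟩, rfl⟩ <;>
      rcases hXY with ⟨h₁, h₂⟩ | ⟨h₁, h₂⟩
    · exact min_le_of_left_le (h₁ x hx).le
    · exact min_le_of_right_le (h₁ y hy).le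
    · exact le_max_of_le_right (h₂ y hy).le
    · exact le_max_of_le_left (h₂ x hx).le
  exact (R.finite.biUnion fun β _ => (Set.finite_Icc _ _).image _).subset hsub

/-- For nonempty `X`: `X` lies in a single alcove. -/
def IsBanded (X : Set V) : Prop :=
  ∀ α ∈ R.Φ, ∃ m : ℤ, ∀ x ∈ X, (m : ℝ) < ⟪x, α⟫ ∧ ⟪x, α⟫ < m + 1

variable {R} in
theorem IsBanded.forall_lt_or_forall_gt {X : Set V} (hX : R.IsBanded X) {α : V} (hα : α ∈ R.Φ)
    (k : ℤ) : (∀ x ∈ X, ⟪x, α⟫ < k) ∨ ∀ x ∈ X, (k : ℝ) < ⟪x, α⟫ := by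
  obtain ⟨m, hm⟩ := hX α hα
  rcases le_or_gt k m with h | h
  · exact Or.inr fun x hx => lt_of_le_of_lt (by exact_mod_cast h) (hm x hx).1
  · have : (m : ℝ) + 1 ≤ k := by exact_mod_cast h
    exact Or.inl fun x hx => lt_of_lt_of_le (hm x hx).2 this

theorem sepSet_subset_union {X Y Z : Set V} (hY : R.IsBanded Y) :
    R.sepSet X Z ⊆ R.sepSet X Y ∪ R.sepSet Y Z := by
  rintro H ⟨hH, β, hβ, k, rfl, hXZ⟩
  rcases hY.forall_lt_or_forall_gt hβ k with hY | hY <;> rcases hXZ with ⟨hX, hZ⟩ | ⟨hZ, hX⟩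
  · exact Or.inr ⟨hH, β, hβ, k, rfl, Or.inl ⟨hY, hZ⟩⟩
  · exact Or.inl ⟨hH, β, hβ, k, rfl, Or.inr ⟨hY, hX⟩⟩
  · exact Or.inl ⟨hH, β, hβ, k, rfl, Or.inl ⟨hX, hY⟩⟩
  · exact Or.inr ⟨hH, β, hβ, k, rfl, Or.inr ⟨hZ, hY⟩⟩

theorem dist_lt_dist_of_sepSet_subset_singleton {X X' Y H : Set V} (hX : X.Nonempty)
    (hX' : X'.Nonempty) (hY : Y.Nonempty) (hX'b : R.IsBanded X') (hXX' : R.sepSet X X' ⊆ {H})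
    (hXY : H ∉ R.sepSet X Y) (hX'Y : H ∈ R.sepSet X' Y) : R.dist X Y < R.dist X' Y := by
  have hsub : insert H (R.sepSet X Y) ⊆ R.sepSet X' Y := by
    refine Set.insert_subset hX'Y fun H' hH' => ?_
    refine (R.sepSet_subset_union hX'b hH').resolve_left fun h => hXY ?_
    rwa [← Set.mem_singleton_iff.1 (hXX' h)]
  calc R.dist X Y < (insert H (R.sepSet X Y)).ncard := by
        rw [Set.ncard_insert_of_notMem hXY (R.sepSet_finite hX hY)]
        exact Nat.lt_succ_self _
    _ ≤ R.dist X' Y := Set.ncard_le_ncard hsub (R.sepSet_finite hX' hY)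

/-- The elements of the extended affine Weyl group `W₀ ⋉ P∨`, `P∨` the coweight lattice. -/
def IsExtAffine (g : V ≃ᵃ[ℝ] V) : Prop :=
  ∃ w, R.IsSpecial w ∧ ∃ u ∈ R.W0, ∀ x, g x = w + u x

theorem isExtAffine_orthoReflAff {α : V} (hα : α ∈ R.Φ) : R.IsExtAffine (orthoReflAff α) :=
  ⟨0, fun _ _ => ⟨0, by simp⟩, orthoRefl α, R.orthoRefl_mem_W0 hα, fun x => (zero_add _).symm⟩

theorem image_hyp {g : V → V} {w : V} {u : V ≃ₗᵢ[ℝ] V} (hg : ∀ x, g x = w + u x) (β : V)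
    {k n : ℤ} (hn : ⟪w, u β⟫ = n) : g '' R.hyp β k = R.hyp (u β) (k + n) := by
  rw [hyp, image_setOf_inner_eq hg, hn, ← Int.cast_add]
  rfl

namespace IsExtAffine

variable {R} {g : V ≃ᵃ[ℝ] V} (hg : R.IsExtAffine g)
include hg

theorem inv : R.IsExtAffine g⁻¹ := by
  obtain ⟨w, hw, u, hu, hgx⟩ := hg
  have hu' : ∀ y, u (u⁻¹ y) = y := u.apply_symm_apply
  refine ⟨-u⁻¹ w, fun β hβ => ?_, u⁻¹, inv_mem hu, fun x => g.injective ?_⟩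
  · obtain ⟨n, hn⟩ := hw (u β) (R.W0_apply_mem hu hβ)
    refine ⟨-n, ?_⟩
    rw [inner_neg_left, ← u.inner_map_map, hu', hn, Int.cast_neg]
  · rw [AffineEquiv.inv_def, g.apply_symm_apply, hgx, map_add, map_neg, hu', hu',
      add_neg_cancel_left]

theorem isHyp_image {H : Set V} (hH : R.IsHyp H) : R.IsHyp (g '' H) := by
  obtain ⟨w, hw, u, hu, hgx⟩ := hg
  obtain ⟨β, hβ, k, rfl⟩ := hH
  obtain ⟨n, hn⟩ := hw (u β) (R.W0_apply_mem hu hβ)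
  exact ⟨u β, R.W0_apply_mem hu hβ, k + n, R.image_hyp hgx β hn⟩

theorem separates_image {H X Y : Set V} (h : R.Separates H X Y) :
    R.Separates (g '' H) (g '' X) (g '' Y) := by
  obtain ⟨w, hw, u, hu, hgx⟩ := hg
  obtain ⟨β, hβ, k, rfl, hXY⟩ := h
  obtain ⟨n, hn⟩ := hw (u β) (R.W0_apply_mem hu hβ)
  refine ⟨u β, R.W0_apply_mem hu hβ, k + n, R.image_hyp hgx β hn, ?_⟩
  simp only [Set.forall_mem_image, inner_apply_of_eq_add hgx, hn, Int.cast_add,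
    add_lt_add_iff_right]
  exact hXY

theorem sepSet_image (X Y : Set V) : R.sepSet (g '' X) (g '' Y) = Set.image g '' R.sepSet X Y := by
  have himage : ∀ (f : V ≃ᵃ[ℝ] V) (Z : Set V), ⇑(f⁻¹) '' (f '' Z) = Z := fun f Z => by
    simp [Set.image_image, AffineEquiv.inv_def]
  refine Set.Subset.antisymm (fun H hH => ?_)
    (Set.image_subset_iff.2 fun H hH => ⟨hg.isHyp_image hH.1, hg.separates_image hH.2⟩)
  refine ⟨⇑(g⁻¹) '' H, ⟨hg.inv.isHyp_image hH.1, ?_⟩, ?_⟩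
  · simpa only [himage] using hg.inv.separates_image hH.2
  · simpa only [inv_inv] using himage g⁻¹ H

theorem dist_image (X Y : Set V) : R.dist (g '' X) (g '' Y) = R.dist X Y := by
  rw [dist_eq_ncard_sepSet, dist_eq_ncard_sepSet, hg.sepSet_image]
  exact Set.ncard_image_of_injective _ (Set.image_injective.2 g.injective)

theorem isBanded_image {X : Set V} (hX : R.IsBanded X) : R.IsBanded (g '' X) := by
  obtain ⟨w, hw, u, hu, hgx⟩ := hg
  intro α hα
  obtain ⟨m, hm⟩ := hX (u⁻¹ α) (R.W0_apply_mem (inv_mem hu) hα)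
  obtain ⟨n, hn⟩ := hw α hα
  refine ⟨m + n, Set.forall_mem_image.2 fun x hx => ?_⟩
  have := inner_apply_of_eq_add hgx x (u⁻¹ α)
  rw [show u (u⁻¹ α) = α from u.apply_symm_apply α] at this
  rw [this, hn, Int.cast_add]
  constructor <;> linarith [hm x hx]

end IsExtAffine

theorem baseAlcove_nonempty : R.baseAlcove.Nonempty := by
  obtain ⟨B, hB⟩ := (R.pos_finite.image fun α => ⟪R.ξ, α⟫).bddAbove
  have hB' : ∀ α ∈ R.pos, ⟪R.ξ, α⟫ < max B 0 + 1 := fun α hα =>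
    (le_max_of_le_left (hB ⟨α, hα, rfl⟩)).trans_lt (lt_add_one _)
  refine ⟨(max B 0 + 1)⁻¹ • R.ξ, fun α hα => ?_⟩
  have hpos : 0 < max B 0 + 1 := by positivity
  rw [real_inner_smul_left, inv_mul_eq_div, div_lt_one hpos]
  exact ⟨div_pos hα.2 hpos, hB' α hα⟩

theorem abs_inner_lt_one {x α : V} (hx : x ∈ R.baseAlcove) (hα : α ∈ R.Φ) : |⟪x, α⟫| < 1 := by
  rcases R.mem_pos_or_neg_mem_pos hα with h | h
  · exact abs_lt.2 ⟨by linarith [(hx α h).1], (hx α h).2⟩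
  · have := hx _ h
    rw [inner_neg_right] at this
    exact abs_lt.2 ⟨by linarith [this.2], by linarith [this.1]⟩

theorem isBanded_baseAlcove : R.IsBanded R.baseAlcove := by
  intro α hα
  rcases R.mem_pos_or_neg_mem_pos hα with h | h
  · exact ⟨0, fun x hx => by simpa using hx α h⟩
  · refine ⟨-1, fun x hx => ?_⟩
    have := hx _ h
    rw [inner_neg_right] at this
    push_cast
    constructor <;> linarith [this.1, this.2]

theorem sepSet_baseAlcove_orthoRefl {γ : V} (hγ : γ ∈ R.simpleRoots) :
    R.sepSet R.baseAlcove (orthoRefl γ '' R.baseAlcove) = {R.hyp γ 0} := by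
  have hγΦ := hγ.1.1
  obtain ⟨a, ha⟩ := R.baseAlcove_nonempty
  ext H
  constructor
  · rintro ⟨-, β, hβ, k, rfl, hXY⟩
    have hsβ := R.orthoRefl_mem hγΦ hβ
    have hbetween : (⟪a, β⟫ < k ∧ k < ⟪a, orthoRefl γ β⟫) ∨
        (⟪a, orthoRefl γ β⟫ < k ∧ k < ⟪a, β⟫) := by
      rw [← inner_orthoRefl_left]
      rcases hXY with ⟨h₁, h₂⟩ | ⟨h₁, h₂⟩
      exacts [Or.inl ⟨h₁ a ha, h₂ _ ⟨a, ha, rfl⟩⟩, Or.inr ⟨h₁ _ ⟨a, ha, rfl⟩, h₂ a ha⟩]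
    have h₁ := abs_lt.1 (R.abs_inner_lt_one ha hβ)
    have h₂ := abs_lt.1 (R.abs_inner_lt_one ha hsβ)
    obtain rfl : k = 0 := by
      have : (-1 : ℝ) < k ∧ (k : ℝ) < 1 := by
        rcases hbetween with h | h <;> constructor <;> linarith [h.1, h.2]
      have : -1 < k ∧ k < 1 := by exact_mod_cast this
      omega
    -- `H_{β,0}` separates `a` from `s_γ a`, which forces `β = ±γ`
    have hopp : ⟪a, β⟫ * ⟪a, orthoRefl γ β⟫ < 0 := by
      rw [Int.cast_zero] at hbetween
      rcases hbetween with ⟨h, h'⟩ | ⟨h, h'⟩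
      exacts [mul_neg_of_neg_of_pos h h', mul_neg_of_pos_of_neg h' h]
    rcases R.mem_pos_or_neg_mem_pos hβ with hp | hp
    · obtain rfl | hne := eq_or_ne β γ
      · rfl
      · nlinarith [(ha β hp).1, (ha _ (R.orthoRefl_mem_pos hγ hp hne)).1]
    · obtain rfl | hne := eq_or_ne (-β) γ
      · change R.hyp β 0 = R.hyp (-β) 0
        ext x
        simp [hyp, inner_neg_right]
      · have h₃ := (ha _ hp).1
        have h₄ := (ha _ (R.orthoRefl_mem_pos hγ hp hne)).1
        rw [inner_neg_right] at h₃
        rw [map_neg, inner_neg_right] at h₄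
        nlinarith
  · rintro rfl
    rw [sepSet_comm]
    refine R.hyp_mem_sepSet hγΦ (Set.forall_mem_image.2 fun x hx => ?_) fun x hx => ?_
    · rw [inner_orthoRefl_self, Int.cast_zero, neg_neg_iff_pos]
      exact (hx γ hγ.1).1
    · exact_mod_cast (hx γ hγ.1).1

theorem isWall_hyp_simpleRoot {γ : V} (hγ : γ ∈ R.simpleRoots) :
    R.IsWall (R.hyp γ 0) R.baseAlcove := by
  refine ⟨γ, hγ.1.1, 0, rfl, ?_⟩
  have : reflPt γ ((0 : ℤ) : ℝ) '' R.baseAlcove = orthoRefl γ '' R.baseAlcove :=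
    Set.image_congr fun x _ => by rw [Int.cast_zero, orthoRefl_apply_eq_reflPt]
  rw [this, dist_eq_ncard_sepSet, R.sepSet_baseAlcove_orthoRefl hγ, Set.ncard_singleton]

theorem isSpecial_of_isHyp_image {g : V ≃ᵃ[ℝ] V} {w : V} {u : V ≃ₗᵢ[ℝ] V} (hu : u ∈ R.W0)
    (hgx : ∀ x, g x = w + u x) (hg : ∀ H, R.IsHyp H → R.IsHyp (g '' H)) : R.IsSpecial w := by
  intro β hβ
  obtain ⟨β', hβ', m, hm⟩ := hg _ ⟨u⁻¹ β, R.W0_apply_mem (inv_mem hu) hβ, 0, rfl⟩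
  rw [hyp, image_setOf_inner_eq hgx, show u (u⁻¹ β) = β from u.apply_symm_apply β,
    Int.cast_zero, zero_add] at hm
  obtain ⟨r, rfl, hr⟩ := exists_smul_of_setOf_inner_eq (R.nonzero β hβ) hm
  rcases R.reduced β hβ r hβ' with rfl | rfl
  · exact ⟨m, by rw [hr, one_mul]⟩
  · exact ⟨-m, by rw [Int.cast_neg, hr]; ring⟩

theorem inner_le_neg_one_of_image_subset_chamber {γ : V} (hγ : γ ∈ R.simpleRoots) {g : V → V}
    {w : V} {u : V ≃ₗᵢ[ℝ] V} (hu : u ∈ R.W0) (hw : R.IsSpecial w) (hgx : ∀ x, g x = w + u x)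
    (hdom : g '' R.baseAlcove ⊆ R.chamber) (huγ : u γ ∉ R.pos) : ⟪w, u γ⟫ ≤ -1 := by
  have huγΦ := R.W0_apply_mem hu hγ.1.1
  obtain ⟨n, hn⟩ := hw _ huγΦ
  obtain ⟨a, ha⟩ := R.baseAlcove_nonempty
  have h := hdom ⟨a, ha, rfl⟩ _ ((R.mem_pos_or_neg_mem_pos huγΦ).resolve_left huγ)
  rw [inner_neg_right, inner_apply_of_eq_add hgx, hn] at h
  have : n < 0 := by exact_mod_cast (by linarith [(ha γ hγ.1).1] : (n : ℝ) < 0)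
  rw [hn]
  exact_mod_cast (by omega : n ≤ -1)

theorem len_lt_len_orthoReflAff_mul {γ : V} (hγ : γ ∈ R.simpleRoots) {g : V ≃ᵃ[ℝ] V}
    (hdom : g '' R.baseAlcove ⊆ R.chamber) : R.len g < R.len (orthoReflAff γ * g) := by
  have hγΦ := hγ.1.1
  have hs := R.isExtAffine_orthoReflAff hγΦ
  obtain ⟨a, ha⟩ := R.baseAlcove_nonempty
  have hlen : R.len (orthoReflAff γ * g) =
      R.dist (orthoRefl γ '' R.baseAlcove) (g '' R.baseAlcove) := by
    rw [len, AffineEquiv.coe_mul, Set.image_comp, ← hs.dist_image, coe_orthoReflAff,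
      image_orthoRefl_image_orthoRefl]
  rw [hlen, len]
  refine R.dist_lt_dist_of_sepSet_subset_singleton ⟨a, ha⟩ ⟨_, a, ha, rfl⟩ ⟨_, a, ha, rfl⟩
    (hs.isBanded_image R.isBanded_baseAlcove) (R.sepSet_baseAlcove_orthoRefl hγ).subset
    (R.hyp_notMem_sepSet (R.nonzero γ hγΦ) ha ⟨a, ha, rfl⟩ ?_ ?_)
    (R.hyp_mem_sepSet hγΦ (Set.forall_mem_image.2 fun x hx => ?_) fun y hy => ?_)
  · exact_mod_cast (ha γ hγ.1).1
  · exact_mod_cast hdom ⟨a, ha, rfl⟩ γ hγ.1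
  · rw [inner_orthoRefl_self, Int.cast_zero, neg_neg_iff_pos]
    exact (hx γ hγ.1).1
  · exact_mod_cast hdom hy γ hγ.1

theorem len_lt_len_mul_orthoReflAff {γ : V} (hγ : γ ∈ R.simpleRoots) {g : V ≃ᵃ[ℝ] V} {w : V}
    {u : V ≃ₗᵢ[ℝ] V} (hu : u ∈ R.W0) (hw : R.IsSpecial w) (hgx : ∀ x, g x = w + u x)
    (hwuγ : ⟪w, u γ⟫ ≤ -1) : R.len g < R.len (g * orthoReflAff γ) := by
  have hγΦ := hγ.1.1
  have hg : R.IsExtAffine g := ⟨w, hw, u, hu, hgx⟩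
  have huγΦ := R.W0_apply_mem hu hγΦ
  obtain ⟨n, hn⟩ := hw _ huγΦ
  obtain ⟨a, ha⟩ := R.baseAlcove_nonempty
  have hA₀ : ∀ x ∈ R.baseAlcove, (n : ℝ) < ⟪x, u γ⟫ := fun x hx => by
    linarith [(abs_lt.1 (R.abs_inner_lt_one hx huγΦ)).1]
  have hlen : R.len (g * orthoReflAff γ) =
      R.dist (g '' (orthoRefl γ '' R.baseAlcove)) R.baseAlcove := by
    rw [len, AffineEquiv.coe_mul, Set.image_comp, coe_orthoReflAff, dist_comm]
  rw [hlen, len, dist_comm]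
  refine R.dist_lt_dist_of_sepSet_subset_singleton (H := R.hyp (u γ) n) ⟨_, a, ha, rfl⟩
    ⟨_, _, ⟨a, ha, rfl⟩, rfl⟩ ⟨a, ha⟩
    (hg.isBanded_image ((R.isExtAffine_orthoReflAff hγΦ).isBanded_image R.isBanded_baseAlcove))
    ?_ (R.hyp_notMem_sepSet (R.nonzero _ huγΦ) ⟨a, ha, rfl⟩ ha ?_ (hA₀ a ha))
    (R.hyp_mem_sepSet huγΦ (Set.forall_mem_image.2 fun y hy => ?_) hA₀)
  · rw [hg.sepSet_image, R.sepSet_baseAlcove_orthoRefl hγ, Set.image_singleton,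
      R.image_hyp hgx γ hn, zero_add]
  · rw [inner_apply_of_eq_add hgx, hn]
    linarith [(ha γ hγ.1).1]
  · obtain ⟨x, hx, rfl⟩ := hy
    rw [inner_apply_of_eq_add hgx, hn, inner_orthoRefl_self]
    linarith [(hx γ hγ.1).1]

end RootSystemData

theorem statement6_general {V : Type*} [NormedAddCommGroup V] [InnerProductSpace ℝ V]
    (R : RootSystemData V) (G : Subgroup (V ≃ᵃ[ℝ] V))
    (hGhyp : ∀ g ∈ G, ∀ H : Set V, R.IsHyp H → R.IsHyp (⇑g '' H))
    (hGfact : ∀ g ∈ G, ∃ w : V, ∃ u : V ≃ₗᵢ[ℝ] V, u ∈ R.W0 ∧ ∀ x, g x = w + u x)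
    (g : V ≃ᵃ[ℝ] V) (hg : g ∈ G) (hnt : ¬ RootSystemData.IsTranslation g)
    (hdom : ⇑g '' R.baseAlcove ⊆ R.chamber) :
    ∃ s : V ≃ᵃ[ℝ] V,
      (∃ α ∈ R.Φ, R.IsWall (R.hyp α 0) R.baseAlcove ∧ ∀ x, s x = reflPt α 0 x) ∧
      R.len (s * g) > R.len g ∧ R.len (g * s) > R.len g ∧ s * g * s ≠ g := by
  obtain ⟨w, u, hu, hgx⟩ := hGfact g hg
  have hw := R.isSpecial_of_isHyp_image hu hgx (hGhyp g hg)
  obtain ⟨γ, hγ, huγ⟩ := R.exists_simpleRoot_apply_notMem_pos hu fun hu1 =>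
    hnt ⟨w, fun x => by rw [hgx, hu1, add_comm]; rfl⟩
  have hwuγ := R.inner_le_neg_one_of_image_subset_chamber hγ hu hw hgx hdom huγ
  exact ⟨orthoReflAff γ, ⟨γ, hγ.1.1, R.isWall_hyp_simpleRoot hγ, orthoRefl_apply_eq_reflPt γ⟩,
    R.len_lt_len_orthoReflAff_mul hγ hdom, R.len_lt_len_mul_orthoReflAff hγ hu hw hgx hwuγ,
    orthoReflAff_mul_mul_orthoReflAff_ne hgx (by linarith)⟩

/-- Dominant case. -/
theorem statement6 {V : Type*} [NormedAddCommGroup V] [InnerProductSpace ℝ V]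
    [FiniteDimensional ℝ V] (R : RootSystemData V) (G : Subgroup (V ≃ᵃ[ℝ] V))
    (hGrefl : ∀ α ∈ R.Φ, ∀ k : ℤ, ∃ g ∈ G, ∀ x, g x = reflPt α (k : ℝ) x)
    (hGhyp : ∀ g ∈ G, ∀ H : Set V, R.IsHyp H → R.IsHyp (⇑g '' H))
    (hGfact : ∀ g ∈ G, ∃ w : V, ∃ u : V ≃ₗᵢ[ℝ] V, u ∈ R.W0 ∧ ∀ x, g x = w + u x)
    (g : V ≃ᵃ[ℝ] V) (hg : g ∈ G) (hnt : ¬ RootSystemData.IsTranslation g)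
    (hdom : ⇑g '' R.baseAlcove ⊆ R.chamber) :
    ∃ s : V ≃ᵃ[ℝ] V,
      (∃ α ∈ R.Φ, R.IsWall (R.hyp α 0) R.baseAlcove ∧ ∀ x, s x = reflPt α 0 x) ∧
      R.len (s * g) > R.len g ∧ R.len (g * s) > R.len g ∧ s * g * s ≠ g :=
  statement6_general R G hGhyp hGfact g hg hnt hdom
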